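/- Let C_n ∈ ℤ[x] be defined by C_0 = 1, C_1 = x, C_{n+1} = x·C_n − C_{n−1}. For each n ≥ 0, write xⁿ = Σ_{i=0}^{n} μ_{i,n} C_i with μ_{i,n} ∈ ℤ (possible since C_i is monic of degree i). Then μ_{i,n} ≥ 0 for all 0 ≤ i ≤ n. -/
import Mathlib


open Polynomial

/-- The normalized Chebyshev polynomials of the second kind:
`C 0 = 1`, `C 1 = X`, `C (n+2) = X * C (n+1) - C n`. -/
noncomputable def chebC : ℕ → Polynomial ℤ
  | 0 => 1
  | 1 => Polynomial.X
  | (n + 2) => Polynomial.X * chebC (n + 1) - chebC n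

/-- Explicit nonnegative coefficients of `X^n` in the `chebC` basis. -/
def chebNu : ℕ → ℕ → ℤ
  | i, 0 => if i = 0 then 1 else 0
  | 0, (n + 1) => chebNu 1 n
  | (i + 1), (n + 1) => chebNu i n + chebNu (i + 2) n

lemma chebNu_nonneg : ∀ n i, 0 ≤ chebNu i n := by
  intro n
  induction n with
  | zero =>
    intro i
    cases i with
    | zero => exact zero_le_one
    | succ i => exact le_refl 0
  | succ n ih =>
    intro i
    cases i with
    | zero => exact ih 1
    | succ i => exact add_nonneg (ih i) (ih (i + 2))

lemma chebNu_eq_zero : ∀ n i, n < i → chebNu i n = 0 := by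
  intro n
  induction n with
  | zero =>
    intro i hi
    match i, hi with
    | (i + 1), _ => rfl
  | succ n ih =>
    intro i hi
    match i, hi with
    | (i + 1), hi =>
      show chebNu i n + chebNu (i + 2) n = 0
      rw [ih i (by omega), ih (i + 2) (by omega), add_zero]

lemma chebC_monic_natDegree : ∀ n, (chebC n).Monic ∧ (chebC n).natDegree = n := by
  intro n
  induction n using Nat.strong_induction_on with
  | _ n ih =>
    match n with
    | 0 => exact ⟨monic_one, natDegree_one⟩
    | 1 => exact ⟨monic_X, natDegree_X⟩
    | (n + 2) =>
      obtain ⟨h1m, h1d⟩ := ih (n + 1) (by omega)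
      obtain ⟨h0m, h0d⟩ := ih n (by omega)
      have hXm : (Polynomial.X * chebC (n + 1)).Monic := (monic_X).mul h1m
      have hXd : (Polynomial.X * chebC (n + 1)).natDegree = n + 2 := by
        rw [natDegree_mul (X_ne_zero) h1m.ne_zero, natDegree_X, h1d]
        omega
      have hlt : (chebC n).degree < (Polynomial.X * chebC (n + 1)).degree := by
        rw [Polynomial.degree_eq_natDegree h0m.ne_zero,
          Polynomial.degree_eq_natDegree hXm.ne_zero, h0d, hXd]
        exact_mod_cast (by omega : n < n + 2)
      constructor
      · show (Polynomial.X * chebC (n + 1) - chebC n).Monic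
        exact hXm.sub_of_left hlt
      · show (Polynomial.X * chebC (n + 1) - chebC n).natDegree = n + 2
        rw [← hXd]
        exact natDegree_sub_eq_left_of_natDegree_lt (by rw [h0d, hXd]; omega)

lemma chebC_indep : ∀ m (c : ℕ → ℤ),
    (∑ i ∈ Finset.range m, Polynomial.C (c i) * chebC i) = 0 → ∀ i < m, c i = 0 := by
  intro m
  induction m with
  | zero => intro c _ i hi; omega
  | succ m ih =>
    intro c hc
    rw [Finset.sum_range_succ] at hc
    have hcm : c m = 0 := by
      have := congrArg (fun p => Polynomial.coeff p m) hc
      simp only [coeff_add, coeff_zero] at this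
      rw [Polynomial.finset_sum_coeff] at this
      have hz : ∀ i ∈ Finset.range m, (Polynomial.C (c i) * chebC i).coeff m = 0 := by
        intro i hi
        rw [coeff_C_mul]
        rw [coeff_eq_zero_of_natDegree_lt, mul_zero]
        rw [(chebC_monic_natDegree i).2]
        exact Finset.mem_range.mp hi
      rw [Finset.sum_eq_zero hz, zero_add, coeff_C_mul] at this
      have : c m * (chebC m).coeff ((chebC m).natDegree) = 0 := by
        rwa [(chebC_monic_natDegree m).2]
      rwa [(chebC_monic_natDegree m).1.coeff_natDegree, mul_one] at this
    rw [hcm, map_zero, zero_mul, add_zero] at hc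
    intro i hi
    rcases Nat.lt_succ_iff_lt_or_eq.mp hi with h | h
    · exact ih c hc i h
    · rw [h, hcm]

lemma chebC_mul_X (i : ℕ) :
    Polynomial.X * chebC (i + 1) = chebC (i + 2) + chebC i := by
  show Polynomial.X * chebC (i + 1) = (Polynomial.X * chebC (i + 1) - chebC i) + chebC i
  ring

lemma chebC_expand : ∀ n, (Polynomial.X : Polynomial ℤ) ^ n =
    ∑ i ∈ Finset.range (n + 1), Polynomial.C (chebNu i n) * chebC i := by
  intro n
  induction n with
  | zero => simp [chebNu, chebC]
  | succ n ih =>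
    have step : Polynomial.X * (∑ i ∈ Finset.range (n + 1), Polynomial.C (chebNu i n) * chebC i)
        = ∑ i ∈ Finset.range (n + 2), Polynomial.C (chebNu i (n + 1)) * chebC i := by
      have e1 : Polynomial.X * (∑ i ∈ Finset.range (n + 1), Polynomial.C (chebNu i n) * chebC i)
          = ∑ i ∈ Finset.range (n + 2), Polynomial.C (chebNu i n) * (Polynomial.X * chebC i) := by
        rw [Finset.sum_range_succ (fun i => Polynomial.C (chebNu i n) * (Polynomial.X * chebC i))
            (n + 1),
          chebNu_eq_zero n (n + 1) (by omega), map_zero, zero_mul, add_zero,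
          Finset.mul_sum]
        exact Finset.sum_congr rfl (fun i _ => by ring)
      rw [e1, Finset.sum_range_succ']
      have e2 : ∀ i ∈ Finset.range (n + 1),
          Polynomial.C (chebNu (i + 1) n) * (Polynomial.X * chebC (i + 1))
          = Polynomial.C (chebNu (i + 1) n) * chebC (i + 2)
            + Polynomial.C (chebNu (i + 1) n) * chebC i := by
        intro i _
        rw [chebC_mul_X, mul_add]
      rw [Finset.sum_congr rfl e2, Finset.sum_add_distrib]
      -- RHS
      rw [show (∑ i ∈ Finset.range (n + 2), Polynomial.C (chebNu i (n + 1)) * chebC i)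
          = ∑ i ∈ Finset.range (n + 1), Polynomial.C (chebNu (i + 1) (n + 1)) * chebC (i + 1)
            + Polynomial.C (chebNu 0 (n + 1)) * chebC 0 from Finset.sum_range_succ' _ _]
      have e3 : ∀ i ∈ Finset.range (n + 1),
          Polynomial.C (chebNu (i + 1) (n + 1)) * chebC (i + 1)
          = Polynomial.C (chebNu i n) * chebC (i + 1)
            + Polynomial.C (chebNu (i + 2) n) * chebC (i + 1) := by
        intro i _
        show Polynomial.C (chebNu i n + chebNu (i + 2) n) * chebC (i + 1) = _
        rw [map_add, add_mul]
      rw [Finset.sum_congr rfl e3, Finset.sum_add_distrib]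
      -- now match pieces
      have hA : (∑ i ∈ Finset.range (n + 1), Polynomial.C (chebNu (i + 1) n) * chebC (i + 2))
            + Polynomial.C (chebNu 0 n) * (Polynomial.X * chebC 0)
          = ∑ i ∈ Finset.range (n + 1), Polynomial.C (chebNu i n) * chebC (i + 1) := by
        rw [Finset.sum_range_succ (fun i => Polynomial.C (chebNu (i + 1) n) * chebC (i + 2)) n,
          chebNu_eq_zero n (n + 1) (by omega), map_zero, zero_mul, add_zero,
          Finset.sum_range_succ' (fun i => Polynomial.C (chebNu i n) * chebC (i + 1)) n]
        congr 1
        rw [show Polynomial.X * chebC 0 = chebC (0 + 1) by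
          show Polynomial.X * 1 = Polynomial.X; rw [mul_one]]
      have hB : (∑ i ∈ Finset.range (n + 1), Polynomial.C (chebNu (i + 1) n) * chebC i)
          = ∑ i ∈ Finset.range (n + 1), Polynomial.C (chebNu (i + 2) n) * chebC (i + 1)
            + Polynomial.C (chebNu 0 (n + 1)) * chebC 0 := by
        rw [Finset.sum_range_succ (fun i => Polynomial.C (chebNu (i + 2) n) * chebC (i + 1)) n,
          chebNu_eq_zero n (n + 2) (by omega), map_zero, zero_mul, add_zero,
          Finset.sum_range_succ' (fun i => Polynomial.C (chebNu (i + 1) n) * chebC i) n]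
        rfl
      linear_combination hA + hB
    have hx : (Polynomial.X : Polynomial ℤ) ^ (n + 1) = Polynomial.X * Polynomial.X ^ n := by
      ring
    rw [hx, ih]
    exact step

theorem coeffs_of_powers_in_chebC_basis_nonneg
    (mu : ℕ → ℕ → ℤ)
    (hexp : ∀ n : ℕ, (Polynomial.X : Polynomial ℤ) ^ n =
      ∑ i ∈ Finset.range (n + 1), Polynomial.C (mu i n) * chebC i) :
    ∀ i n : ℕ, i ≤ n → 0 ≤ mu i n := by
  intro i n hin
  have h1 := hexp n
  have h2 := chebC_expand n
  have hz : (∑ j ∈ Finset.range (n + 1),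
      Polynomial.C (mu j n - chebNu j n) * chebC j) = 0 := by
    have : (∑ j ∈ Finset.range (n + 1), Polynomial.C (mu j n) * chebC j)
        - (∑ j ∈ Finset.range (n + 1), Polynomial.C (chebNu j n) * chebC j) = 0 := by
      rw [← h1, ← h2, sub_self]
    rw [← this, ← Finset.sum_sub_distrib]
    exact Finset.sum_congr rfl (fun j _ => by rw [map_sub, sub_mul])
  have h3 : mu i n - chebNu i n = 0 :=
    chebC_indep (n + 1) (fun j => mu j n - chebNu j n) hz i (by omega)
  have hnn := chebNu_nonneg n i
  omega
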